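/- Let a be a binary vector and let g_1, g_2, b ∈ F2[x] be binary polynomials with g_1 ≠ 0 and b ≠ 0, g_1 dividing x^n − a(x) with deg g_1 = t_2, b dividing x^n − a(x) with deg b = t_1, deg g_2 < deg b, and b dividing ((x^n − a(x))/g_1)·g_2. If C is the F2[x]-submodule of R_n generated by α g_1 + g_2 and b, then C has exactly 2^{n − t_1}·2^{n − t_2} elements. -/

import Mathlib

open Polynomial

noncomputable section

abbrev F4 : Type := GaloisField 2 2

def IsBin (z : F4) : Prop := z = 0 ∨ z = 1

def IsBinVec {n : ℕ} (a : Fin n → F4) : Prop := ∀ i, IsBin (a i)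

def IsBinPoly (p : Polynomial F4) : Prop := ∀ i, IsBin (p.coeff i)

def polyOfVec {n : ℕ} (c : Fin n → F4) : Polynomial F4 :=
  ∑ i : Fin n, Polynomial.C (c i) * X ^ (i : ℕ)

def rightShift {n : ℕ} (a c : Fin n → F4) : Fin n → F4 := fun i =>
  (if (i : ℕ) = 0 then 0 else c ⟨(i : ℕ) - 1, lt_of_le_of_lt (Nat.sub_le _ _) i.isLt⟩)
    + c ⟨n - 1, Nat.sub_lt i.pos Nat.one_pos⟩ * a i

def leftShift {n : ℕ} (a c : Fin n → F4) : Fin n → F4 := fun i =>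
  (if h : (i : ℕ) + 1 < n then c ⟨(i : ℕ) + 1, h⟩ else 0) + c ⟨0, i.pos⟩ * a i

def seqShift {n : ℕ} (a c : Fin n → F4) : Fin n → F4 := fun i =>
  if h : (i : ℕ) + 1 < n then c ⟨(i : ℕ) + 1, h⟩ else ∑ j, a j * c j

def IsRightPolycyclic {n : ℕ} (a : Fin n → F4) (C : AddSubgroup (Fin n → F4)) : Prop :=
  ∀ c ∈ C, rightShift a c ∈ C

def IsLeftPolycyclic {n : ℕ} (a : Fin n → F4) (C : AddSubgroup (Fin n → F4)) : Prop :=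
  ∀ c ∈ C, leftShift a c ∈ C

def quotMk {n : ℕ} (a : Fin n → F4) :
    Polynomial F4 →+* Polynomial F4 ⧸ Ideal.span {X ^ n - polyOfVec a} :=
  Ideal.Quotient.mk _

def codeImage {n : ℕ} (a : Fin n → F4) (C : AddSubgroup (Fin n → F4)) :
    Set (Polynomial F4 ⧸ Ideal.span {X ^ n - polyOfVec a}) :=
  (fun c => quotMk a (polyOfVec c)) '' (C : Set (Fin n → F4))

/-! Since `1, α` are linearly independent over `F₂`, a binary combination
`f₁ (α g₁ + g₂) + f₂ b` vanishes modulo the binary polynomial `m = x^n - a(x)` exactly when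
`m ∣ f₁ g₁` and `m ∣ f₁ g₂ + f₂ b`, i.e. when `m / g₁ ∣ f₁` and then `m / b ∣ f₂`. Conversely,
`b ∣ (m / g₁) g₂` lets one reduce `f₁` modulo `m / g₁` and then `f₂` modulo `m / b` without
changing the codeword, so codewords correspond bijectively to pairs of binary polynomials with
`deg f₁ < n - t₂` and `deg f₂ < n - t₁`. -/

section Degree

variable {R : Type*} [Semiring R]

theorem Polynomial.card_degreeLT (d : ℕ) : Nat.card (degreeLT R d) = Nat.card R ^ d := by
  rw [Nat.card_congr (degreeLTEquiv R d).toEquiv, Nat.card_fun, Nat.card_fin]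

theorem Polynomial.eq_zero_of_dvd_of_mem_degreeLT [NoZeroDivisors R] {Q D : R[X]}
    (hD : D ∈ degreeLT R Q.natDegree) (h : Q ∣ D) : D = 0 := by
  rcases eq_or_ne Q 0 with rfl | hQ
  · exact zero_dvd_iff.mp h
  · exact eq_zero_of_dvd_of_degree_lt h (degree_eq_natDegree hQ ▸ mem_degreeLT.mp hD)

theorem Polynomial.natDegree_eq_sub_of_mul_eq [NoZeroDivisors R] {P Q M : R[X]} (hM : M ≠ 0)
    (h : P * Q = M) : P.natDegree = M.natDegree - Q.natDegree := by
  rw [← h, natDegree_mul (left_ne_zero_of_mul (h ▸ hM)) (right_ne_zero_of_mul (h ▸ hM)),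
    Nat.add_sub_cancel]

theorem Polynomial.mod_mem_degreeLT {k : Type*} [Field k] (p : k[X]) {q : k[X]} (hq : q ≠ 0) :
    p % q ∈ degreeLT k q.natDegree :=
  mem_degreeLT.mpr (degree_eq_natDegree hq ▸ degree_mod_lt p hq)

end Degree

section TwoGenerators

variable {k L : Type*} [Field k] [Field L] [Algebra k L]

theorem eq_zero_of_map_add_C_mul_map_eq_zero {α : L} (hα : α ∉ Set.range (algebraMap k L))
    {P Q : k[X]} (h : P.map (algebraMap k L) + C α * Q.map (algebraMap k L) = 0) :
    P = 0 ∧ Q = 0 := by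
  have hQ : Q = 0 := by
    ext i
    by_contra hQi
    have hi := congrArg (coeff · i) h
    simp only [coeff_add, coeff_C_mul, coeff_map, coeff_zero] at hi
    refine hα ⟨-P.coeff i / Q.coeff i, ?_⟩
    have hQi' : algebraMap k L (Q.coeff i) ≠ 0 := by simpa using hQi
    rw [map_div₀, map_neg, div_eq_iff hQi']
    linear_combination -hi
  subst hQ
  simpa using h

theorem dvd_of_map_dvd_add_C_mul_map {α : L} (hα : α ∉ Set.range (algebraMap k L))
    {M A B : k[X]} (hM : M ≠ 0)
    (h : M.map (algebraMap k L) ∣ A.map (algebraMap k L) + C α * B.map (algebraMap k L)) :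
    M ∣ A ∧ M ∣ B := by
  set f := algebraMap k L
  have hdvd : M.map f ∣ (A % M).map f + C α * (B % M).map f := by
    have hA := congrArg (map f) (EuclideanDomain.div_add_mod A M)
    have hB := congrArg (map f) (EuclideanDomain.div_add_mod B M)
    simp only [Polynomial.map_add, Polynomial.map_mul] at hA hB
    have hsplit : (A % M).map f + C α * (B % M).map f = (A.map f + C α * B.map f) -
        M.map f * ((A / M).map f + C α * (B / M).map f) := by
      linear_combination hA + C α * hB
    exact hsplit ▸ dvd_sub h (dvd_mul_right _ _)
  have hdeg : ((A % M).map f + C α * (B % M).map f).degree < (M.map f).degree := by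
    rw [degree_map]
    refine (degree_add_le _ _).trans_lt (max_lt ?_ ?_)
    · rw [degree_map]; exact degree_mod_lt A hM
    · rw [degree_C_mul (fun h0 => hα ⟨0, by rw [map_zero, h0]⟩), degree_map]
      exact degree_mod_lt B hM
  obtain ⟨hA, hB⟩ :=
    eq_zero_of_map_add_C_mul_map_eq_zero hα (eq_zero_of_dvd_of_degree_lt hdvd hdeg)
  exact ⟨EuclideanDomain.mod_eq_zero.mp hA, EuclideanDomain.mod_eq_zero.mp hB⟩

def codeMap (α : L) (G₁ G₂ B M : k[X]) (F : k[X] × k[X]) :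
    L[X] ⧸ Ideal.span {M.map (algebraMap k L)} :=
  Ideal.Quotient.mk _ (F.1.map (algebraMap k L) *
      (C α * G₁.map (algebraMap k L) + G₂.map (algebraMap k L)) +
    F.2.map (algebraMap k L) * B.map (algebraMap k L))

variable {α : L} {G₁ G₂ B M Q₁ Q₂ R : k[X]}

theorem codeMap_eq_codeMap_iff {F F' : k[X] × k[X]} :
    codeMap α G₁ G₂ B M F = codeMap α G₁ G₂ B M F' ↔
      M.map (algebraMap k L) ∣ ((F.1 - F'.1) * G₂ + (F.2 - F'.2) * B).map (algebraMap k L) +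
        C α * ((F.1 - F'.1) * G₁).map (algebraMap k L) := by
  rw [codeMap, codeMap, Ideal.Quotient.eq, Ideal.mem_span_singleton]
  congr! 1
  simp only [Polynomial.map_sub, Polynomial.map_add, Polynomial.map_mul]
  ring

theorem injOn_codeMap (hα : α ∉ Set.range (algebraMap k L)) (hM : M ≠ 0)
    (hQ₁ : Q₁ * G₁ = M) (hQ₂ : Q₂ * B = M) :
    Set.InjOn (codeMap α G₁ G₂ B M)
      ((degreeLT k Q₁.natDegree : Set k[X]) ×ˢ (degreeLT k Q₂.natDegree : Set k[X])) := by
  rintro ⟨F₁, F₂⟩ ⟨hF₁, hF₂⟩ ⟨F₁', F₂'⟩ ⟨hF₁', hF₂'⟩ h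
  obtain ⟨hsum, hD₁G₁⟩ := dvd_of_map_dvd_add_C_mul_map hα hM (codeMap_eq_codeMap_iff.mp h)
  have hD₁ : F₁ - F₁' = 0 := eq_zero_of_dvd_of_mem_degreeLT (Submodule.sub_mem _ hF₁ hF₁')
    ((mul_dvd_mul_iff_right (right_ne_zero_of_mul (hQ₁ ▸ hM))).mp (hQ₁ ▸ hD₁G₁))
  rw [hD₁, zero_mul, zero_add, ← hQ₂] at hsum
  have hD₂ : F₂ - F₂' = 0 := eq_zero_of_dvd_of_mem_degreeLT (Submodule.sub_mem _ hF₂ hF₂')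
    ((mul_dvd_mul_iff_right (right_ne_zero_of_mul (hQ₂ ▸ hM))).mp hsum)
  exact Prod.ext (sub_eq_zero.mp hD₁) (sub_eq_zero.mp hD₂)

theorem range_codeMap (hM : M ≠ 0) (hQ₁ : Q₁ * G₁ = M) (hQ₂ : Q₂ * B = M)
    (hR : Q₁ * G₂ = B * R) :
    Set.range (codeMap α G₁ G₂ B M) = codeMap α G₁ G₂ B M ''
      ((degreeLT k Q₁.natDegree : Set k[X]) ×ˢ (degreeLT k Q₂.natDegree : Set k[X])) := by
  refine subset_antisymm ?_ (Set.image_subset_range _ _)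
  rintro _ ⟨⟨F₁, F₂⟩, rfl⟩
  set H := F₁ / Q₁
  set K := (F₂ + H * R) / Q₂
  refine ⟨(F₁ % Q₁, (F₂ + H * R) % Q₂), ⟨mod_mem_degreeLT _ (left_ne_zero_of_mul (hQ₁ ▸ hM)),
    mod_mem_degreeLT _ (left_ne_zero_of_mul (hQ₂ ▸ hM))⟩, codeMap_eq_codeMap_iff.mpr ?_⟩
  have e₁ : (F₁ % Q₁ - F₁) * G₂ + ((F₂ + H * R) % Q₂ - F₂) * B = M * -K := by
    rw [EuclideanDomain.mod_eq_sub_mul_div, EuclideanDomain.mod_eq_sub_mul_div]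
    linear_combination (-H) * hR - K * hQ₂
  have e₂ : (F₁ % Q₁ - F₁) * G₁ = M * -H := by
    rw [EuclideanDomain.mod_eq_sub_mul_div]
    linear_combination (-H) * hQ₁
  rw [e₁, e₂, Polynomial.map_mul, Polynomial.map_mul, mul_left_comm, ← mul_add]
  exact dvd_mul_right _ _

theorem ncard_range_codeMap [Finite k] (hα : α ∉ Set.range (algebraMap k L)) (hM : M ≠ 0)
    (hQ₁ : Q₁ * G₁ = M) (hQ₂ : Q₂ * B = M) (hR : Q₁ * G₂ = B * R) :
    (Set.range (codeMap α G₁ G₂ B M)).ncard =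
      Nat.card k ^ Q₁.natDegree * Nat.card k ^ Q₂.natDegree := by
  rw [range_codeMap hM hQ₁ hQ₂ hR, (injOn_codeMap hα hM hQ₁ hQ₂).ncard_image,
    ← Nat.card_coe_set_eq, Nat.card_congr (Equiv.Set.prod _ _), Nat.card_prod,
    SetLike.coe_sort_coe, SetLike.coe_sort_coe, card_degreeLT, card_degreeLT]

end TwoGenerators

theorem isBin_iff_mem_range (z : F4) : IsBin z ↔ z ∈ Set.range (algebraMap (ZMod 2) F4) := by
  constructor
  · rintro (rfl | rfl)
    exacts [⟨0, map_zero _⟩, ⟨1, map_one _⟩]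
  · rintro ⟨c, rfl⟩
    fin_cases c
    exacts [Or.inl (map_zero _), Or.inr (map_one _)]

theorem isBinPoly_iff_mem_lifts (p : F4[X]) :
    IsBinPoly p ↔ p ∈ lifts (algebraMap (ZMod 2) F4) := by
  simp only [IsBinPoly, isBin_iff_mem_range, lifts_iff_coeff_lifts]

theorem polyOfVec_mem_lifts {n : ℕ} {a : Fin n → F4} (ha : IsBinVec a) :
    polyOfVec a ∈ lifts (algebraMap (ZMod 2) F4) := by
  refine sum_mem fun i _ => ?_
  obtain ⟨c, hc⟩ := (isBin_iff_mem_range _).mp (ha i)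
  rw [← hc]
  exact mul_mem (C_mem_lifts _ c) (X_pow_mem_lifts _ _)

theorem notMem_range_algebraMap_of_sq_add_add_one_eq_zero {α : F4} (hα : α ^ 2 + α + 1 = 0) :
    α ∉ Set.range (algebraMap (ZMod 2) F4) := by
  rintro ⟨c, rfl⟩
  have hc : c ^ 2 + c + 1 = 0 := (algebraMap (ZMod 2) F4).injective <| by
    simpa only [map_add, map_pow, map_one, map_zero] using hα
  fin_cases c <;> revert hc <;> decide

theorem exists_monic_map_eq_X_pow_sub_polyOfVec {n : ℕ} {a : Fin n → F4} (ha : IsBinVec a) :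
    ∃ M : (ZMod 2)[X], M.Monic ∧ M.natDegree = n ∧
      M.map (algebraMap (ZMod 2) F4) = X ^ n - polyOfVec a := by
  obtain ⟨A, hA⟩ := (mem_lifts _).mp (polyOfVec_mem_lifts ha)
  have hAdeg : A.degree < n := by
    rw [← degree_map A (algebraMap (ZMod 2) F4), hA]
    exact degree_sum_fin_lt a
  refine ⟨X ^ n - A, monic_X_pow_sub hAdeg, natDegree_eq_of_degree_eq_some ?_, by simp [hA]⟩
  rw [degree_sub_eq_left_of_degree_lt (by rwa [degree_X_pow]), degree_X_pow]

theorem setOf_binary_combination_eq_range_codeMap {α : F4} {G₁ G₂ B M : (ZMod 2)[X]} :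
    {y : F4[X] ⧸ Ideal.span {M.map (algebraMap (ZMod 2) F4)} | ∃ f1 f2 : F4[X],
      IsBinPoly f1 ∧ IsBinPoly f2 ∧ y = Ideal.Quotient.mk _ (f1 *
        (C α * G₁.map (algebraMap (ZMod 2) F4) + G₂.map (algebraMap (ZMod 2) F4)) +
          f2 * B.map (algebraMap (ZMod 2) F4))} = Set.range (codeMap α G₁ G₂ B M) := by
  ext y
  simp [isBinPoly_iff_mem_lifts, mem_lifts, codeMap, eq_comm]

theorem stmt_15_general (n : ℕ) (a : Fin n → F4) (ha : IsBinVec a)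
    (α : F4) (hα : α ^ 2 + α + 1 = 0)
    (g1 g2 b : Polynomial F4)
    (hg1bin : IsBinPoly g1) (hg2bin : IsBinPoly g2) (hbbin : IsBinPoly b)
    (qg : Polynomial F4) (hqgbin : IsBinPoly qg) (hqg : qg * g1 = X ^ n - polyOfVec a)
    (qb : Polynomial F4) (hqbbin : IsBinPoly qb) (hqb : qb * b = X ^ n - polyOfVec a)
    (t1 t2 : ℕ) (ht1 : b.natDegree = t1) (ht2 : g1.natDegree = t2)
    (r : Polynomial F4) (hrbin : IsBinPoly r) (hr : qg * g2 = b * r) :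
    Set.ncard {y : Polynomial F4 ⧸ Ideal.span {X ^ n - polyOfVec a} |
        ∃ f1 f2 : Polynomial F4, IsBinPoly f1 ∧ IsBinPoly f2 ∧
          y = quotMk a (f1 * (Polynomial.C α * g1 + g2) + f2 * b)}
      = 2 ^ (n - t1) * 2 ^ (n - t2) := by
  rw [isBinPoly_iff_mem_lifts, mem_lifts] at hg1bin hg2bin hbbin hqgbin hqbbin hrbin
  obtain ⟨G₁, rfl⟩ := hg1bin
  obtain ⟨G₂, rfl⟩ := hg2bin
  obtain ⟨B, rfl⟩ := hbbin
  obtain ⟨Q₁, rfl⟩ := hqgbin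
  obtain ⟨Q₂, rfl⟩ := hqbbin
  obtain ⟨R, rfl⟩ := hrbin
  obtain ⟨M, hMmonic, hMdeg, hmap⟩ := exists_monic_map_eq_X_pow_sub_polyOfVec ha
  simp only [← hmap, ← Polynomial.map_mul,
    (map_injective (algebraMap (ZMod 2) F4) (RingHom.injective _)).eq_iff] at hqg hqb hr
  -- `quotMk` hides a proof mentioning its ideal, which blocks rewriting the ideal; unfold it first.
  simp only [show ∀ p, quotMk a p = Ideal.Quotient.mk (Ideal.span {X ^ n - polyOfVec a}) p from
    fun _ => rfl]
  rw [← hmap, setOf_binary_combination_eq_range_codeMap,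
    ncard_range_codeMap (notMem_range_algebraMap_of_sq_add_add_one_eq_zero hα) hMmonic.ne_zero
      hqg hqb hr,
    natDegree_eq_sub_of_mul_eq hMmonic.ne_zero hqg, natDegree_eq_sub_of_mul_eq hMmonic.ne_zero hqb,
    hMdeg, ← ht1, ← ht2, natDegree_map, natDegree_map, Nat.card_zmod, mul_comm]

/-- if `g1 ≠ 0`, `b ≠ 0` are binary with `g1 ∣ x^n - a(x)`
(quotient `qg`, `deg g1 = t2`), `b ∣ x^n - a(x)` (quotient `qb`,
`deg b = t1`), `deg g2 < deg b`, and `b ∣ ((x^n - a(x))/g1) · g2 = qg · g2` in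
`F2[x]`, then the `F2[x]`-submodule of `R_n` generated by `α g1 + g2` and `b`
has exactly `2^(n - t1) · 2^(n - t2)` elements. -/
theorem stmt_15 (n : ℕ) (hn : 0 < n) (a : Fin n → F4) (ha : IsBinVec a)
    (α : F4) (hα : α ^ 2 + α + 1 = 0)
    (g1 g2 b : Polynomial F4)
    (hg1bin : IsBinPoly g1) (hg2bin : IsBinPoly g2) (hbbin : IsBinPoly b)
    (hg1ne : g1 ≠ 0) (hbne : b ≠ 0)
    (qg : Polynomial F4) (hqgbin : IsBinPoly qg) (hqg : qg * g1 = X ^ n - polyOfVec a)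
    (qb : Polynomial F4) (hqbbin : IsBinPoly qb) (hqb : qb * b = X ^ n - polyOfVec a)
    (t1 t2 : ℕ) (ht1 : b.natDegree = t1) (ht2 : g1.natDegree = t2)
    (hg2deg : g2.degree < b.degree)
    (r : Polynomial F4) (hrbin : IsBinPoly r) (hr : qg * g2 = b * r) :
    Set.ncard {y : Polynomial F4 ⧸ Ideal.span {X ^ n - polyOfVec a} |
        ∃ f1 f2 : Polynomial F4, IsBinPoly f1 ∧ IsBinPoly f2 ∧
          y = quotMk a (f1 * (Polynomial.C α * g1 + g2) + f2 * b)}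
      = 2 ^ (n - t1) * 2 ^ (n - t2) :=
  stmt_15_general n a ha α hα g1 g2 b hg1bin hg2bin hbbin qg hqgbin hqg qb hqbbin hqb t1 t2 ht1 ht2
    r hrbin hr
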